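/- The permanent-memory Accept-Last algorithms are not Pareto efficient: for 3 agents with preferences (a>b>c, a>b>c, b>a>c), there is an agent order for which the Accept-Last stack algorithm outputs the matching 1:c, 2:b, 3:a, which is Pareto dominated by 1:c, 2:a, 3:b. -/
import Mathlib


/-- State of the permanent-memory Accept-Last stack algorithm (PLS): the stack of
agents still to propose, for each item the set of agents it has previously held
(an item never takes back an agent it has held, i.e. it has rejected it), and for
each item the agent currently holding it. -/
structure PLSState (n : ℕ) where
  stack : List (Fin n)
  hist : Fin n → Finset (Fin n)
  holder : Fin n → Option (Fin n)

/-- The most preferred element of `S` according to the rank function `ra`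
(lower rank = more preferred). -/
def bestIn {n : ℕ} (ra : Fin n → ℕ) (S : Finset (Fin n)) : Option (Fin n) :=
  (List.finRange n).find? fun o => decide (o ∈ S ∧ ∀ o' ∈ S, ra o ≤ ra o')

/-- One step of PLS: the agent `a` on top of the stack proposes to its most
preferred item `o` among those that have not previously rejected it (never held
`a`).  Following the Accept-Last policy, `o` accepts `a`, breaking any current
engagement; the displaced agent is pushed onto the stack. -/
def plsStep {n : ℕ} (r : Fin n → Fin n → ℕ) (s : PLSState n) : PLSState n :=
  match s.stack with
  | [] => s
  | a :: rest =>
      match bestIn (r a) (Finset.univ.filter fun o => a ∉ s.hist o) with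
      | none => { s with stack := rest }
      | some o =>
          { stack := (match s.holder o with
              | none => rest
              | some b => b :: rest),
            hist := Function.update s.hist o (insert a (s.hist o)),
            holder := Function.update s.holder o (some a) }

/-- The final state of PLS on agent ranks `r` starting from the initial agent
stack `init` (enough steps are taken for the algorithm to terminate). -/
def plsRun {n : ℕ} (r : Fin n → Fin n → ℕ) (init : List (Fin n)) : PLSState n :=
  (plsStep r)^[n * n + n] { stack := init, hist := fun _ => ∅, holder := fun _ => none }

/-- The permanent-memory Accept-Last stack algorithm is not Pareto efficient: for
the 3 agents `1, 2, 3` with preferences `a>b>c`, `a>b>c`, `b>a>c` (agents `0,1,2`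
and items `a,b,c = 0,1,2` below, ranks `r`), there is an initial agent order for
which PLS outputs the matching `1:c, 2:b, 3:a`, and this matching is Pareto
dominated by `1:c, 2:a, 3:b`. -/
theorem pls_not_pareto_efficient :
    (∃ init : List (Fin 3), init.Perm [0, 1, 2] ∧
      (plsRun ![![0, 1, 2], ![0, 1, 2], ![1, 0, 2]] init).holder 0 = some 2 ∧
      (plsRun ![![0, 1, 2], ![0, 1, 2], ![1, 0, 2]] init).holder 1 = some 1 ∧
      (plsRun ![![0, 1, 2], ![0, 1, 2], ![1, 0, 2]] init).holder 2 = some 0) ∧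
    (∀ a : Fin 3,
        ![![0, 1, 2], ![0, 1, 2], ![1, 0, 2]] a ((![2, 0, 1] : Fin 3 → Fin 3) a)
          ≤ ![![0, 1, 2], ![0, 1, 2], ![1, 0, 2]] a ((![2, 1, 0] : Fin 3 → Fin 3) a)) ∧
    (∃ a : Fin 3,
        ![![0, 1, 2], ![0, 1, 2], ![1, 0, 2]] a ((![2, 0, 1] : Fin 3 → Fin 3) a)
          < ![![0, 1, 2], ![0, 1, 2], ![1, 0, 2]] a ((![2, 1, 0] : Fin 3 → Fin 3) a)) := by
  refine ⟨⟨[0, 2, 1], by decide, ?_, ?_, ?_⟩, by decide, ⟨2, by decide⟩⟩ <;> decide
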